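/- arXiv:2312.11127 — 2 statements merged into one kernel-verified Lean document; each statement's English description precedes it below -/
import Mathlib

section
/- The function g(u, v) = u · log(1 + v/u) (natural logarithm) is jointly concave on the open positive quadrant {(u, v) ∈ ℝ² : u > 0, v > 0}. -/
/-!
`g(u, v) = u · log (1 + v / u)` is the perspective `u · f (v / u)` of the concave function
`f t = log (1 + t)`, and the perspective of a concave function is jointly concave: for
`u = a u₁ + b u₂`, the point `v / u` is the convex combination of `v₁ / u₁` and `v₂ / u₂` with
weights `a u₁ / u` and `b u₂ / u`, so concavity of `f` at that combination, multiplied by `u`,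
is concavity of the perspective.
-/

open Set

section Perspective

variable {E : Type*} [AddCommGroup E] [Module ℝ E]

lemma inv_smul_add_eq_div_smul_add {u₁ u₂ a b : ℝ} (x₁ x₂ : E) (hu₁ : u₁ ≠ 0) (hu₂ : u₂ ≠ 0)
    (hu : a * u₁ + b * u₂ ≠ 0) :
    (a * u₁ + b * u₂)⁻¹ • (a • x₁ + b • x₂) =
      (a * u₁ / (a * u₁ + b * u₂)) • (u₁⁻¹ • x₁) + (b * u₂ / (a * u₁ + b * u₂)) • (u₂⁻¹ • x₂) := by
  simp only [smul_add, smul_smul]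
  congr 2 <;> field_simp

lemma mul_div_add_mul_div_eq_one {u₁ u₂ a b : ℝ} (hu : a * u₁ + b * u₂ ≠ 0) :
    a * u₁ / (a * u₁ + b * u₂) + b * u₂ / (a * u₁ + b * u₂) = 1 := by
  field_simp

theorem ConcaveOn.perspective {s : Set E} {f : E → ℝ} (hf : ConcaveOn ℝ s f) :
    ConcaveOn ℝ {p : ℝ × E | 0 < p.1 ∧ p.1⁻¹ • p.2 ∈ s} (fun p => p.1 * f (p.1⁻¹ • p.2)) := by
  have mem_domain : ∀ ⦃u₁ u₂ a b : ℝ⦄ ⦃x₁ x₂ : E⦄, 0 < u₁ → u₁⁻¹ • x₁ ∈ s → 0 < u₂ →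
      u₂⁻¹ • x₂ ∈ s → 0 ≤ a → 0 ≤ b → a + b = 1 →
      0 < a * u₁ + b * u₂ ∧ (a * u₁ + b * u₂)⁻¹ • (a • x₁ + b • x₂) ∈ s := by
    intro u₁ u₂ a b x₁ x₂ hu₁ hx₁ hu₂ hx₂ ha hb hab
    have hu : 0 < a * u₁ + b * u₂ := convex_Ioi (0 : ℝ) hu₁ hu₂ ha hb hab
    refine ⟨hu, ?_⟩
    rw [inv_smul_add_eq_div_smul_add x₁ x₂ hu₁.ne' hu₂.ne' hu.ne']
    exact hf.1 hx₁ hx₂ (by positivity) (by positivity) (mul_div_add_mul_div_eq_one hu.ne')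
  refine ⟨?_, ?_⟩
  · rintro ⟨u₁, x₁⟩ ⟨hu₁, hx₁⟩ ⟨u₂, x₂⟩ ⟨hu₂, hx₂⟩ a b ha hb hab
    exact mem_domain hu₁ hx₁ hu₂ hx₂ ha hb hab
  · rintro ⟨u₁, x₁⟩ ⟨hu₁, hx₁⟩ ⟨u₂, x₂⟩ ⟨hu₂, hx₂⟩ a b ha hb hab
    simp only [Prod.smul_mk, Prod.mk_add_mk, smul_eq_mul]
    set u := a * u₁ + b * u₂
    have hu : 0 < u := (mem_domain hu₁ hx₁ hu₂ hx₂ ha hb hab).1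
    have key := hf.2 hx₁ hx₂ (by positivity : 0 ≤ a * u₁ / u) (by positivity : 0 ≤ b * u₂ / u)
      (mul_div_add_mul_div_eq_one hu.ne')
    rw [← inv_smul_add_eq_div_smul_add x₁ x₂ hu₁.ne' hu₂.ne' hu.ne', smul_eq_mul,
      smul_eq_mul] at key
    calc a * (u₁ * f (u₁⁻¹ • x₁)) + b * (u₂ * f (u₂⁻¹ • x₂))
        = u * (a * u₁ / u * f (u₁⁻¹ • x₁) + b * u₂ / u * f (u₂⁻¹ • x₂)) := by
          field_simp
      _ ≤ u * f (u⁻¹ • (a • x₁ + b • x₂)) := mul_le_mul_of_nonneg_left key hu.le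

end Perspective

/-- The function `g(u, v) = u · log(1 + v/u)` (natural logarithm) is jointly
concave on the open positive quadrant. -/
theorem g_concave :
    ConcaveOn ℝ {p : ℝ × ℝ | 0 < p.1 ∧ 0 < p.2}
      (fun p : ℝ × ℝ => p.1 * Real.log (1 + p.2 / p.1)) := by
  have hlog : ConcaveOn ℝ (Ioi (-1)) (fun t : ℝ => Real.log (1 + t)) := by
    simpa [Function.comp_def] using strictConcaveOn_log_Ioi.concaveOn.translate_right 1
  have hquadrant : Convex ℝ {p : ℝ × ℝ | 0 < p.1 ∧ 0 < p.2} :=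
    (convex_Ioi 0).prod (convex_Ioi 0)
  refine (hlog.perspective.subset ?_ hquadrant).congr ?_
  · rintro ⟨u, v⟩ ⟨hu, hv⟩
    exact ⟨hu, by simp only [smul_eq_mul, mem_Ioi]; linarith [mul_pos (inv_pos.2 hu) hv]⟩
  · rintro ⟨u, v⟩ -
    simp only [smul_eq_mul, div_eq_inv_mul]
end

section
/- Let h ∈ ℂ^N, let w, w̄ ∈ ℂ^N, let γ > 0, γ̄ > 0, and let I ≥ 0 be a real number. If the linearized SCA constraint 2·Re((h^H w)·conj(h^H w̄))/γ̄ − γ·|h^H w̄|²/γ̄² ≥ I holds, then the original SINR-type constraint |h^H w|²/γ ≥ I holds; equivalently, |h^H w|² ≥ γ·I. -/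
/-!
The linearized constraint is the tangent-plane minorant of the convex function `x ↦ |x|²` at the
point `(γ/γ̄)·h^H w̄`: for any `y`, `|x|² ≥ 2 Re(x ȳ) - |y|²` since the difference is `|x - y|²`.
Multiplied by `γ`, the left side of (18) is exactly this minorant at `x = h^H w`.
-/

open scoped ComplexConjugate

theorem two_mul_inner_sub_norm_sq_le_norm_sq {E : Type*} [SeminormedAddCommGroup E]
    [InnerProductSpace ℝ E] (x y : E) : 2 * inner ℝ x y - ‖y‖ ^ 2 ≤ ‖x‖ ^ 2 := by
  linarith [norm_sub_sq_real x y, sq_nonneg ‖x - y‖]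

theorem Complex.mul_linearized_norm_sq_le_norm_sq (a b : ℂ) (γ γbar : ℝ) :
    γ * (2 * (a * conj b).re / γbar - γ * ‖b‖ ^ 2 / γbar ^ 2) ≤ ‖a‖ ^ 2 := by
  have hinner : inner ℝ a ((γ / γbar : ℝ) * b) = γ / γbar * (a * conj b).re := by
    rw [real_inner_comm, Complex.inner, map_mul, Complex.conj_ofReal, mul_left_comm,
      Complex.re_ofReal_mul]
  have hnorm : ‖((γ / γbar : ℝ) : ℂ) * b‖ ^ 2 = (γ / γbar) ^ 2 * ‖b‖ ^ 2 := by
    rw [norm_mul, Complex.norm_real, Real.norm_eq_abs, mul_pow, sq_abs]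
  have := two_mul_inner_sub_norm_sq_le_norm_sq a ((γ / γbar : ℝ) * b)
  rw [hinner, hnorm] at this
  convert this using 1
  ring

theorem sca_implies_sinr_general {N : ℕ} (h w wbar : EuclideanSpace ℂ (Fin N))
    (γ γbar I : ℝ) (hγ : 0 < γ)
    (hlin : 2 * ((inner ℂ h w : ℂ) * (starRingEnd ℂ) (inner ℂ h wbar : ℂ)).re / γbar
        - γ * ‖(inner ℂ h wbar : ℂ)‖ ^ 2 / γbar ^ 2 ≥ I) :
    ‖(inner ℂ h w : ℂ)‖ ^ 2 / γ ≥ I ∧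
      ‖(inner ℂ h w : ℂ)‖ ^ 2 ≥ γ * I := by
  have hsinr : γ * I ≤ ‖(inner ℂ h w : ℂ)‖ ^ 2 :=
    (mul_le_mul_of_nonneg_left hlin hγ.le).trans
      (Complex.mul_linearized_norm_sq_le_norm_sq _ _ γ γbar)
  exact ⟨(le_div_iff₀ hγ).2 (by linarith), hsinr⟩

/-- Every point feasible for the linearized SCA constraint (18) is feasible for the
original SINR-type constraint (17): `|h^H w|²/γ ≥ I`, equivalently `|h^H w|² ≥ γ·I`.
Here `h^H w` is realized as the inner product `⟪h, w⟫` on `EuclideanSpace ℂ (Fin N)`,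
which is conjugate-linear in `h`. -/
theorem sca_implies_sinr {N : ℕ} (h w wbar : EuclideanSpace ℂ (Fin N))
    (γ γbar I : ℝ) (hγ : 0 < γ) (hγbar : 0 < γbar) (hI : 0 ≤ I)
    (hlin : 2 * ((inner ℂ h w : ℂ) * (starRingEnd ℂ) (inner ℂ h wbar : ℂ)).re / γbar
        - γ * ‖(inner ℂ h wbar : ℂ)‖ ^ 2 / γbar ^ 2 ≥ I) :
    ‖(inner ℂ h w : ℂ)‖ ^ 2 / γ ≥ I ∧
      ‖(inner ℂ h w : ℂ)‖ ^ 2 ≥ γ * I :=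
  sca_implies_sinr_general h w wbar γ γbar I hγ hlin
end
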